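/- Let V := { [[x1, 0, x4], [0, x2, x5], [x4, x5, x3]] : x ∈ ℝ^5 } ⊆ S^3 and let D := proj_V(S^3_+) be the dual cone of the homogeneous convex cone S^3_++ ∩ V. Then the matrices A := [[1,0,1],[0,1,1],[1,1,1]] and B := [[1,0,−1],[0,1,−1],[−1,−1,1]] lie in D, the rays ℝ₊·A and ℝ₊·B are extreme rays of D, and I_3 = (1/2)·A + (1/2)·B. In particular, the identity matrix I_3, which lies in the relative interior of D, is the sum of two points lying on extreme rays of D, so the Carathéodory number of D at I_3 is at most 2 (whereas the rank of the cone S^3_++ ∩ V is 3). -/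

import Mathlib

noncomputable section
open Matrix

/-- A face of a convex cone `C`: a nonempty convex subset `F ⊆ C` such that whenever the open
segment between two points of `C` meets `F`, both endpoints lie in `F`. -/
def IsFaceOf {E : Type*} [AddCommGroup E] [Module ℝ E] (F C : Set E) : Prop :=
  F.Nonempty ∧ F ⊆ C ∧ Convex ℝ F ∧
    ∀ x ∈ C, ∀ y ∈ C, (∃ t : ℝ, 0 < t ∧ t < 1 ∧ t • x + (1 - t) • y ∈ F) → x ∈ F ∧ y ∈ F

/-- An extreme ray of `C`: a face whose linear span is one-dimensional. -/
def IsExtremeRayOf {E : Type*} [AddCommGroup E] [Module ℝ E] (R C : Set E) : Prop :=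
  IsFaceOf R C ∧ Module.finrank ℝ (Submodule.span ℝ R) = 1

/-- `x` is a sum of at most `m` points, each lying on an extreme ray of `C`. -/
def SumExtreme {E : Type*} [AddCommGroup E] [Module ℝ E] (C : Set E) (m : ℕ) (x : E) : Prop :=
  ∃ (k : ℕ) (f : Fin k → E), k ≤ m ∧ (∀ i, ∃ R, IsExtremeRayOf R C ∧ f i ∈ R) ∧ x = ∑ i, f i

/-- The Carathéodory number of the cone `C` at the point `x`. -/
def caraNumberAt {E : Type*} [AddCommGroup E] [Module ℝ E] (C : Set E) (x : E) : ℕ :=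
  sInf {m | SumExtreme C m x}

/-- The ray generated by a point. -/
def ray {E : Type*} [AddCommGroup E] [Module ℝ E] (A : E) : Set E :=
  {X | ∃ c : ℝ, 0 ≤ c ∧ X = c • A}

/-- The trace (Frobenius) inner product on spaces of real matrices. -/
def trInner {a b : Type*} [Fintype a] [Fintype b] (X Y : Matrix a b ℝ) : ℝ :=
  Matrix.trace (Xᵀ * Y)

/-- `y` is the orthogonal projection of `x` onto the subspace `W` (with respect to the
trace inner product). -/
def IsProjOn {a b : Type*} [Fintype a] [Fintype b] (W : Set (Matrix a b ℝ))
    (x y : Matrix a b ℝ) : Prop :=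
  y ∈ W ∧ ∀ w ∈ W, trInner (x - y) w = 0

/-- The image of the set `S` under orthogonal projection onto the subspace `W`. -/
def projSet {a b : Type*} [Fintype a] [Fintype b] (W S : Set (Matrix a b ℝ)) :
    Set (Matrix a b ℝ) :=
  {y | ∃ x ∈ S, IsProjOn W x y}

/-- The subspace `V` of symmetric `3×3` matrices whose `(1,2)` entry vanishes. -/
def V19 : Set (Matrix (Fin 3) (Fin 3) ℝ) :=
  {X | X.IsSymm ∧ X 0 1 = 0 ∧ X 1 0 = 0}

/-- The dual cone `D = proj_V(S³₊)` of the homogeneous convex cone `S³₊₊ ∩ V`. -/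
def D19 : Set (Matrix (Fin 3) (Fin 3) ℝ) :=
  projSet V19 {X : Matrix (Fin 3) (Fin 3) ℝ | X.PosSemidef}

/-! On symmetric matrices the orthogonal projection onto `V` just zeroes the `(0,1)` and
`(1,0)` entries, so `D` is the image of `S³₊` under that map, and `A`, `B` are the images of
the rank-one matrices `v vᵀ` with `v = (1,1,±1)`.

For `v = (a,b,c)` with `c ≠ 0` put `u = (c,0,-a)`, `z = (0,c,-b)`, which span `v^⊥`. The
matrix `S = u uᵀ + z zᵀ` lies in `V`, so `⟨S | proj X⟩ = uᵀXu + zᵀXz ≥ 0` for `X ⪰ 0`, with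
equality only if `X` kills `u` and `z`, i.e. `X ∈ ℝ₊ v vᵀ`. Thus `S` exposes the ray through
`proj (v vᵀ)`, which is therefore extreme.

`I₃` is in the relative interior because, by Gershgorin, every symmetric matrix entrywise
close to `I₃` is positive semidefinite, and such a matrix lying in `V` belongs to `D`. -/

section TrInner

variable {m n : Type*} [Fintype m] [Fintype n]

lemma trInner_eq_sum (X Y : Matrix m n ℝ) : trInner X Y = ∑ i, ∑ j, X i j * Y i j := by
  simp only [trInner, trace, diag, mul_apply, transpose_apply]
  exact Finset.sum_comm

lemma trInner_comm (X Y : Matrix m n ℝ) : trInner X Y = trInner Y X := by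
  simp only [trInner_eq_sum, mul_comm]

lemma trInner_sub_left (X Y Z : Matrix m n ℝ) :
    trInner (X - Y) Z = trInner X Z - trInner Y Z := by
  simp only [trInner, transpose_sub, Matrix.sub_mul, trace_sub]

lemma trInner_add_left (X Y Z : Matrix m n ℝ) :
    trInner (X + Y) Z = trInner X Z + trInner Y Z := by
  simp only [trInner, transpose_add, Matrix.add_mul, trace_add]

lemma trInner_self_eq_zero_iff {X : Matrix m n ℝ} : trInner X X = 0 ↔ X = 0 :=
  trace_conjTranspose_mul_self_eq_zero_iff

def trInnerₗ (S : Matrix m n ℝ) : Matrix m n ℝ →ₗ[ℝ] ℝ where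
  toFun := trInner S
  map_add' X Y := by simp only [trInner, Matrix.mul_add, trace_add]
  map_smul' c X := by
    simp only [trInner, Matrix.mul_smul, trace_smul, smul_eq_mul, RingHom.id_apply]

lemma trInnerₗ_apply (S X : Matrix m n ℝ) : trInnerₗ S X = trInner S X := rfl

lemma trInner_vecMulVec_self (u : n → ℝ) (X : Matrix n n ℝ) :
    trInner (vecMulVec u u) X = u ⬝ᵥ X *ᵥ u := by
  rw [trInner, transpose_vecMulVec, vecMulVec_mul, trace_vecMulVec, dotProduct_comm,
    dotProduct_mulVec]

end TrInner

section Ray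

variable {E : Type*} [AddCommGroup E] [Module ℝ E]

lemma self_mem_ray (A : E) : A ∈ ray A := ⟨1, zero_le_one, (one_smul ℝ A).symm⟩

lemma convex_ray (A : E) : Convex ℝ (ray A) := by
  rintro _ ⟨c, hc, rfl⟩ _ ⟨d, hd, rfl⟩ s t hs ht -
  exact ⟨s * c + t * d, by positivity, by rw [smul_smul, smul_smul, ← add_smul]⟩

lemma span_ray (A : E) : Submodule.span ℝ (ray A) = ℝ ∙ A := by
  refine le_antisymm (Submodule.span_le.2 ?_)
    (Submodule.span_mono (Set.singleton_subset_iff.2 (self_mem_ray A)))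
  rintro _ ⟨c, -, rfl⟩
  exact Submodule.smul_mem _ c (Submodule.mem_span_singleton_self A)

theorem isExtremeRayOf_ray_of_exposed {C : Set E} {A : E} (f : E →ₗ[ℝ] ℝ) (hA : A ≠ 0)
    (hAC : ray A ⊆ C) (hfA : f A = 0) (hfC : ∀ x ∈ C, 0 ≤ f x)
    (hker : ∀ x ∈ C, f x = 0 → x ∈ ray A) : IsExtremeRayOf (ray A) C := by
  refine ⟨⟨⟨0, 0, le_rfl, (zero_smul ℝ A).symm⟩, hAC, convex_ray A, ?_⟩, ?_⟩
  · rintro x hx y hy ⟨t, ht0, ht1, c, -, hxy⟩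
    have hsum : t * f x + (1 - t) * f y = 0 := by
      simpa [hfA] using congr_arg f hxy
    have hfx := hfC x hx
    have hfy := hfC y hy
    exact ⟨hker x hx (by nlinarith), hker y hy (by nlinarith)⟩
  · rw [span_ray, finrank_span_singleton hA]

theorem caraNumberAt_add_le_two {C R₁ R₂ : Set E} {x₁ x₂ : E} (h₁ : IsExtremeRayOf R₁ C)
    (hx₁ : x₁ ∈ R₁) (h₂ : IsExtremeRayOf R₂ C) (hx₂ : x₂ ∈ R₂) :
    caraNumberAt C (x₁ + x₂) ≤ 2 := by
  refine Nat.sInf_le ⟨2, ![x₁, x₂], le_rfl, ?_, by simp [Fin.sum_univ_two]⟩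
  intro i
  fin_cases i
  exacts [⟨R₁, h₁, hx₁⟩, ⟨R₂, h₂, hx₂⟩]

end Ray

section Projection

variable {m n : Type*} [Fintype m] [Fintype n]

lemma IsProjOn.unique {W : Submodule ℝ (Matrix m n ℝ)} {x y y' : Matrix m n ℝ}
    (h : IsProjOn W x y) (h' : IsProjOn W x y') : y = y' := by
  have hd : y - y' ∈ W := W.sub_mem h.1 h'.1
  rw [← sub_eq_zero, ← trInner_self_eq_zero_iff]
  calc trInner (y - y') (y - y')
      = trInner (x - y') (y - y') - trInner (x - y) (y - y') := by
        rw [← trInner_sub_left, sub_sub_sub_cancel_left]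
    _ = 0 := by rw [h'.2 _ hd, h.2 _ hd, sub_zero]

end Projection

def V19Submodule : Submodule ℝ (Matrix (Fin 3) (Fin 3) ℝ) where
  carrier := V19
  zero_mem' := ⟨isSymm_zero, rfl, rfl⟩
  add_mem' := fun ⟨hX, hX01, hX10⟩ ⟨hY, hY01, hY10⟩ =>
    ⟨hX.add hY, by simp [hX01, hY01], by simp [hX10, hY10]⟩
  smul_mem' := fun c _ ⟨hX, hX01, hX10⟩ => ⟨hX.smul c, by simp [hX01], by simp [hX10]⟩

/-- On symmetric matrices this is the orthogonal projection onto `V19`. -/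
def projV (X : Matrix (Fin 3) (Fin 3) ℝ) : Matrix (Fin 3) (Fin 3) ℝ :=
  !![1, 0, 1; 0, 1, 1; 1, 1, 1] ⊙ X

lemma projV_smul (c : ℝ) (X : Matrix (Fin 3) (Fin 3) ℝ) : projV (c • X) = c • projV X :=
  hadamard_smul _ _ c

lemma projV_mem_V19 {X : Matrix (Fin 3) (Fin 3) ℝ} (hX : X.IsSymm) : projV X ∈ V19 := by
  refine ⟨?_, by simp [projV], by simp [projV]⟩
  ext i j
  fin_cases i <;> fin_cases j <;> simp [projV, hX.apply]

lemma trInner_projV {S : Matrix (Fin 3) (Fin 3) ℝ} (hS : S ∈ V19)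
    (X : Matrix (Fin 3) (Fin 3) ℝ) :
    trInner S (projV X) = trInner S X := by
  simp [trInner_eq_sum, Fin.sum_univ_three, projV, hS.2.1, hS.2.2]

lemma isProjOn_projV {X : Matrix (Fin 3) (Fin 3) ℝ} (hX : X.IsSymm) :
    IsProjOn V19 X (projV X) :=
  ⟨projV_mem_V19 hX, fun w hw => by
    rw [trInner_sub_left, trInner_comm X, trInner_comm (projV X), trInner_projV hw, sub_self]⟩

lemma D19_eq_image : D19 = projV '' {X | X.PosSemidef} := by
  ext y
  constructor
  · rintro ⟨X, hX, hXy⟩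
    exact ⟨X, hX, IsProjOn.unique (W := V19Submodule)
      (isProjOn_projV (isHermitian_iff_isSymm.mp hX.isHermitian)) hXy⟩
  · rintro ⟨X, hX, rfl⟩
    exact ⟨X, hX, isProjOn_projV (isHermitian_iff_isSymm.mp hX.isHermitian)⟩

lemma eq_smul_vecMulVec_of_mulVec_eq_zero {X : Matrix (Fin 3) (Fin 3) ℝ} (hX : X.IsSymm)
    {a b c : ℝ} (hc : c ≠ 0) (hu : X *ᵥ ![c, 0, -a] = 0) (hz : X *ᵥ ![0, c, -b] = 0) :
    X = (X 2 2 / c ^ 2) • vecMulVec ![a, b, c] ![a, b, c] := by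
  set v : Fin 3 → ℝ := ![a, b, c]
  have hrow : ∀ i j, c * X i j = v j * X i 2 := by
    intro i j
    have hui := congrFun hu i
    have hzi := congrFun hz i
    simp only [mulVec, dotProduct, Fin.sum_univ_three] at hui hzi
    fin_cases j <;> simp [v] at hui hzi ⊢ <;> linarith
  ext i j
  have key : c ^ 2 * X i j = v i * v j * X 2 2 :=
    calc c ^ 2 * X i j = v j * (c * X 2 i) := by rw [sq, mul_assoc, hrow, hX.apply]; ring
      _ = v i * v j * X 2 2 := by rw [hrow]; ring
  rw [Matrix.smul_apply, vecMulVec_apply, smul_eq_mul]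
  field_simp
  linarith

theorem isExtremeRayOf_ray_projV_vecMulVec {a b c : ℝ} (hc : c ≠ 0) :
    IsExtremeRayOf (ray (projV (vecMulVec ![a, b, c] ![a, b, c]))) D19 := by
  set v : Fin 3 → ℝ := ![a, b, c]
  set u : Fin 3 → ℝ := ![c, 0, -a]
  set z : Fin 3 → ℝ := ![0, c, -b]
  set S := vecMulVec u u + vecMulVec z z
  have hSV : S ∈ V19 := by
    refine ⟨?_, by simp [S, u, z], by simp [S, u, z]⟩
    simp only [IsSymm, S, transpose_add, transpose_vecMulVec]
  have hS : ∀ X, trInner S (projV X) = u ⬝ᵥ X *ᵥ u + z ⬝ᵥ X *ᵥ z := fun X => by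
    rw [trInner_projV hSV, trInner_add_left, trInner_vecMulVec_self, trInner_vecMulVec_self]
  have hq : ∀ X : Matrix (Fin 3) (Fin 3) ℝ, X.PosSemidef → ∀ w, 0 ≤ w ⬝ᵥ X *ᵥ w :=
    fun X hX w => by simpa using hX.dotProduct_mulVec_nonneg w
  rw [D19_eq_image]
  refine isExtremeRayOf_ray_of_exposed (trInnerₗ S) ?_ ?_ ?_ ?_ ?_
  · intro h
    simpa [v, projV, hc] using congrFun (congrFun h 2) 2
  · rintro _ ⟨t, ht, rfl⟩
    exact ⟨t • vecMulVec v v, (posSemidef_vecMulVec_self_star v).smul ht, projV_smul t _⟩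
  · rw [trInnerₗ_apply, hS]
    simp [u, z, v, dotProduct, Fin.sum_univ_three]
    ring
  · rintro _ ⟨X, hX, rfl⟩
    rw [trInnerₗ_apply, hS]
    exact add_nonneg (hq X hX u) (hq X hX z)
  · rintro _ ⟨X, hX, rfl⟩ hX0
    rw [trInnerₗ_apply, hS] at hX0
    have hXu : X *ᵥ u = 0 := (hX.dotProduct_mulVec_zero_iff u).1 <| by
      simp only [star_trivial]; linarith [hq X hX u, hq X hX z]
    have hXz : X *ᵥ z = 0 := (hX.dotProduct_mulVec_zero_iff z).1 <| by
      simp only [star_trivial]; linarith [hq X hX u, hq X hX z]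
    refine ⟨X 2 2 / c ^ 2, div_nonneg hX.diag_nonneg (sq_nonneg c), ?_⟩
    rw [← projV_smul, ← eq_smul_vecMulVec_of_mulVec_eq_zero
      (isHermitian_iff_isSymm.mp hX.isHermitian) hc hXu hXz]

theorem posSemidef_of_sum_abs_le_diag {n : Type*} [Fintype n] [DecidableEq n]
    {A : Matrix n n ℝ} (hA : A.IsHermitian) (h : ∀ k, ∑ j ∈ Finset.univ.erase k, |A k j| ≤ A k k) :
    A.PosSemidef := by
  rw [hA.posSemidef_iff_eigenvalues_nonneg]
  intro i
  rw [Pi.zero_apply]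
  have hμ : Module.End.HasEigenvalue (toLin' A) (hA.eigenvalues i) := by
    rw [Module.End.hasEigenvalue_iff_mem_spectrum, spectrum_toLin']
    exact hA.eigenvalues_mem_spectrum_real i
  obtain ⟨k, hk⟩ := eigenvalue_mem_ball hμ
  rw [Metric.mem_closedBall, Real.dist_eq] at hk
  simp only [Real.norm_eq_abs] at hk
  linarith [h k, (abs_sub_le_iff.1 hk).2]

theorem posSemidef_of_abs_sub_one_lt {n : Type*} [Fintype n] [DecidableEq n]
    {Z : Matrix n n ℝ} (hZ : Z.IsSymm)
    (h : ∀ i j, |Z i j - (1 : Matrix n n ℝ) i j| < 1 / Fintype.card n) :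
    Z.PosSemidef := by
  refine posSemidef_of_sum_abs_le_diag (isHermitian_iff_isSymm.mpr hZ) fun k => ?_
  have hsum : ∑ j, |Z k j - (1 : Matrix n n ℝ) k j| < 1 :=
    calc _ < ∑ _j : n, (1 / Fintype.card n : ℝ) :=
          Finset.sum_lt_sum_of_nonempty ⟨k, Finset.mem_univ k⟩ fun j _ => h k j
      _ = 1 := by
        have : Nonempty n := ⟨k⟩
        have : (Fintype.card n : ℝ) ≠ 0 := Nat.cast_ne_zero.2 Fintype.card_ne_zero
        simp [Finset.card_univ, this]
  rw [← Finset.add_sum_erase _ _ (Finset.mem_univ k), one_apply_eq] at hsum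
  have hoff : ∑ j ∈ Finset.univ.erase k, |Z k j - (1 : Matrix n n ℝ) k j| =
      ∑ j ∈ Finset.univ.erase k, |Z k j| :=
    Finset.sum_congr rfl fun j hj => by rw [one_apply_ne' (Finset.ne_of_mem_erase hj), sub_zero]
  linarith [neg_abs_le (Z k k - 1)]

lemma mem_intrinsicInterior_of_isOpen {E : Type*} [AddCommGroup E] [Module ℝ E]
    [TopologicalSpace E] {s U : Set E} {W : Submodule ℝ E} {x : E} (hsW : s ⊆ W) (hx : x ∈ s)
    (hU : IsOpen U) (hxU : x ∈ U) (hUW : U ∩ W ⊆ s) : x ∈ intrinsicInterior ℝ s := by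
  have hspan : affineSpan ℝ s ≤ W.toAffineSubspace :=
    (affineSpan_le).2 fun y hy => Submodule.mem_toAffineSubspace.2 (hsW hy)
  refine mem_intrinsicInterior.2 ⟨⟨x, subset_affineSpan ℝ s hx⟩, ?_, rfl⟩
  refine interior_maximal (t := ((↑) : affineSpan ℝ s → E) ⁻¹' U) (fun y hy => hUW ⟨hy, ?_⟩)
    (hU.preimage continuous_subtype_val) hxU
  exact Submodule.mem_toAffineSubspace.1 (hspan y.2)

lemma mem_D19_of_posSemidef {Z : Matrix (Fin 3) (Fin 3) ℝ} (hZV : Z ∈ V19) (hZ : Z.PosSemidef) :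
    Z ∈ D19 :=
  ⟨Z, hZ, hZV, fun w _ => by simp [trInner]⟩

theorem one_mem_intrinsicInterior_D19 :
    (1 : Matrix (Fin 3) (Fin 3) ℝ) ∈ intrinsicInterior ℝ D19 := by
  have hU : IsOpen {Z : Matrix (Fin 3) (Fin 3) ℝ |
      ∀ i j, |Z i j - (1 : Matrix (Fin 3) (Fin 3) ℝ) i j| < 1 / 3} := by
    simp only [Set.ofPred_forall]
    exact isOpen_iInter_of_finite fun i => isOpen_iInter_of_finite fun j =>
      isOpen_lt (by fun_prop) continuous_const
  have hone : (1 : Matrix (Fin 3) (Fin 3) ℝ) ∈ V19 := ⟨isSymm_one, rfl, rfl⟩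
  refine mem_intrinsicInterior_of_isOpen (W := V19Submodule) (fun _ ⟨_, _, hy⟩ => hy.1)
    (mem_D19_of_posSemidef hone PosSemidef.one) hU (fun i j => by simp) ?_
  rintro Z ⟨hZ, hZV⟩
  exact mem_D19_of_posSemidef hZV (posSemidef_of_abs_sub_one_lt hZV.1 (by simpa using hZ))

/-- **A dual cone with Carathéodory number smaller than the rank.**
For the non-selfdual homogeneous convex cone `S³₊₊ ∩ V` of rank `3`, the matrices
`A = [[1,0,1],[0,1,1],[1,1,1]]` and `B = [[1,0,-1],[0,1,-1],[-1,-1,1]]` lie in the dual cone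
`D = proj_V(S³₊)`, the rays `ℝ₊·A` and `ℝ₊·B` are extreme rays of `D`, and
`I₃ = (1/2)·A + (1/2)·B`.  In particular `I₃`, which lies in the relative interior of `D`,
is a sum of two points on extreme rays of `D`, so the Carathéodory number of `D` at `I₃` is
at most `2`. -/
theorem dual_caratheodory_example :
    (!![(1:ℝ), 0, 1; 0, 1, 1; 1, 1, 1] ∈ D19) ∧
    (!![(1:ℝ), 0, -1; 0, 1, -1; -1, -1, 1] ∈ D19) ∧
    IsExtremeRayOf (ray !![(1:ℝ), 0, 1; 0, 1, 1; 1, 1, 1]) D19 ∧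
    IsExtremeRayOf (ray !![(1:ℝ), 0, -1; 0, 1, -1; -1, -1, 1]) D19 ∧
    ((1 : Matrix (Fin 3) (Fin 3) ℝ) =
      (1 / 2 : ℝ) • !![(1:ℝ), 0, 1; 0, 1, 1; 1, 1, 1] +
      (1 / 2 : ℝ) • !![(1:ℝ), 0, -1; 0, 1, -1; -1, -1, 1]) ∧
    ((1 : Matrix (Fin 3) (Fin 3) ℝ) ∈ intrinsicInterior ℝ D19) ∧
    caraNumberAt D19 (1 : Matrix (Fin 3) (Fin 3) ℝ) ≤ 2 := by
  have hA : projV (vecMulVec ![1, 1, 1] ![1, 1, 1]) = !![(1:ℝ), 0, 1; 0, 1, 1; 1, 1, 1] := by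
    ext i j; fin_cases i <;> fin_cases j <;> simp [projV]
  have hB :
      projV (vecMulVec ![1, 1, -1] ![1, 1, -1]) = !![(1:ℝ), 0, -1; 0, 1, -1; -1, -1, 1] := by
    ext i j; fin_cases i <;> fin_cases j <;> simp [projV]
  have rayA := hA ▸ isExtremeRayOf_ray_projV_vecMulVec (a := 1) (b := 1) one_ne_zero
  have rayB :=
    hB ▸ isExtremeRayOf_ray_projV_vecMulVec (a := 1) (b := 1) (neg_ne_zero.2 one_ne_zero)
  have hsum : (1 : Matrix (Fin 3) (Fin 3) ℝ) =
      (1 / 2 : ℝ) • !![(1:ℝ), 0, 1; 0, 1, 1; 1, 1, 1] +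
        (1 / 2 : ℝ) • !![(1:ℝ), 0, -1; 0, 1, -1; -1, -1, 1] := by
    ext i j; fin_cases i <;> fin_cases j <;> norm_num
  refine ⟨rayA.1.2.1 (self_mem_ray _), rayB.1.2.1 (self_mem_ray _), rayA, rayB, hsum,
    one_mem_intrinsicInterior_D19, ?_⟩
  rw [hsum]
  exact caraNumberAt_add_le_two rayA ⟨1 / 2, by norm_num, rfl⟩ rayB ⟨1 / 2, by norm_num, rfl⟩
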